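/- arXiv:1503.08842 — 7 statements merged into one kernel-verified Lean document; each statement's English description precedes it below -/
import Mathlib

section
/- If σ, σ' ∈ Ξ first differ at index n, then ‖Φ(σ) − Φ(σ')‖ ≥ s_n τ − κ R_n, where R_n = ∑_{i>n} s_i. -/
/-! Write `Φ(σ) - Φ(σ') = ∑ sᵢ (d^i_{σᵢ} - d^i_{σ'ᵢ})`. The terms before `n` vanish, the `n`-th
term has norm at least `sₙ τ`, and every later term has norm at most `κ sᵢ`, so the tail has norm
at most `κ Rₙ`. -/

theorem norm_sub_tsum_tail_le_norm_tsum {E : Type*} [NormedAddCommGroup E] [CompleteSpace E]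
    {f : ℕ → E} {g : ℕ → ℝ} (hg : Summable g)
    (hfg : ∀ i, ‖f i‖ ≤ g i) {n : ℕ} (hvanish : ∀ i < n, f i = 0) :
    ‖f n‖ - ∑' i, g (n + 1 + i) ≤ ‖∑' i, f i‖ := by
  have hf : Summable f := .of_norm_bounded hg hfg
  have hhead : ∑ i ∈ Finset.range (n + 1), f i = f n := by
    rw [Finset.sum_range_succ, Finset.sum_eq_zero fun i hi => hvanish i (Finset.mem_range.mp hi),
      zero_add]
  have htail : ‖∑' i, f (i + (n + 1))‖ ≤ ∑' i, g (n + 1 + i) := by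
    simp_rw [add_comm _ (n + 1)]
    exact tsum_of_norm_bounded ((summable_nat_add_iff (n + 1)).mpr hg |>.congr
      fun i => by rw [add_comm]).hasSum fun i => hfg _
  have htri := norm_sub_le (f n + ∑' i, f (i + (n + 1))) (∑' i, f (i + (n + 1)))
  rw [add_sub_cancel_right] at htri
  rw [← hf.sum_add_tsum_nat_add (n + 1), hhead]
  linarith

theorem stmt_1_general (p N : ℕ) (hN : 0 < N)
    (s : ℕ → ℝ) (hs : ∀ n, 0 < s n) (hsum : Summable s)
    (d : ℕ → Fin N → EuclideanSpace ℝ (Fin p))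
    (hzero : ∀ n, d n ⟨0, hN⟩ = 0)
    (κ τ : ℝ)
    (hκ : ∀ (n : ℕ) (i j : Fin N), i ≠ j → ‖d n i - d n j‖ ≤ κ)
    (hτd : ∀ (n : ℕ) (i j : Fin N), i ≠ j → τ ≤ ‖d n i - d n j‖)
    (R : ℕ → ℝ) (hR : ∀ n, R n = ∑' i, s (n + 1 + i))
    (σ σ' : ℕ → Fin N) (n : ℕ)
    (hdiff : σ n ≠ σ' n) (hagree : ∀ i < n, σ i = σ' i) :
    s n * τ - κ * R n ≤ ‖(∑' i, s i • d i (σ i)) - ∑' i, s i • d i (σ' i)‖ := by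
  have hκ' : ∀ i a b, ‖d i a - d i b‖ ≤ κ := fun i a b => by
    rcases eq_or_ne a b with rfl | hab
    · simpa using (norm_nonneg _).trans (hκ n _ _ hdiff)
    · exact hκ i a b hab
  have hterm : ∀ i a b, ‖s i • (d i a - d i b)‖ ≤ κ * s i := fun i a b => by
    rw [norm_smul, Real.norm_of_nonneg (hs i).le, mul_comm]
    exact mul_le_mul_of_nonneg_right (hκ' i a b) (hs i).le
  have hΦ : ∀ ρ : ℕ → Fin N, Summable fun i => s i • d i (ρ i) := fun ρ =>
    .of_norm_bounded (hsum.mul_left κ) fun i => by simpa [hzero] using hterm i (ρ i) ⟨0, hN⟩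
  have hlead : s n * τ ≤ ‖s n • (d n (σ n) - d n (σ' n))‖ := by
    rw [norm_smul, Real.norm_of_nonneg (hs n).le]
    exact mul_le_mul_of_nonneg_left (hτd n _ _ hdiff) (hs n).le
  have key := norm_sub_tsum_tail_le_norm_tsum (hsum.mul_left κ) (fun i => hterm i (σ i) (σ' i))
    (n := n) fun i hi => by simp [hagree i hi]
  rw [tsum_mul_left, ← hR] at key
  rw [← (hΦ σ).tsum_sub (hΦ σ')]
  simp_rw [← smul_sub]
  linarith

/-- If `σ, σ'` first differ at index `n`, then
`‖Φ(σ) − Φ(σ')‖ ≥ sₙ τ − κ Rₙ`, where `Rₙ = ∑_{i>n} sᵢ`. -/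
theorem stmt_1 (p N : ℕ) (hN : 0 < N)
    (s : ℕ → ℝ) (hs : ∀ n, 0 < s n) (hsum : Summable s)
    (d : ℕ → Fin N → EuclideanSpace ℝ (Fin p))
    (hzero : ∀ n, d n ⟨0, hN⟩ = 0)
    (κ τ : ℝ) (hτ : 0 < τ)
    (hκ : ∀ (n : ℕ) (i j : Fin N), i ≠ j → ‖d n i - d n j‖ ≤ κ)
    (hτd : ∀ (n : ℕ) (i j : Fin N), i ≠ j → τ ≤ ‖d n i - d n j‖)
    (R : ℕ → ℝ) (hR : ∀ n, R n = ∑' i, s (n + 1 + i))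
    (σ σ' : ℕ → Fin N) (n : ℕ)
    (hdiff : σ n ≠ σ' n) (hagree : ∀ i < n, σ i = σ' i) :
    s n * τ - κ * R n ≤ ‖(∑' i, s i • d i (σ i)) - ∑' i, s i • d i (σ' i)‖ :=
  stmt_1_general p N hN s hs hsum d hzero κ τ hκ hτd R hR σ σ' n hdiff hagree
end

section
/- Under the separation condition sup_n κR_n/(τ s_n) = M < 1, the map Φ : Ξ → ℝ^p is injective, hence a homeomorphism onto its image C_{s,𝒟}. -/
/-!
Two codings `σ ≠ σ'` first differ at some index `n`. Subtracting their images, the `n`-th term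
has norm at least `τ sₙ`, while it must cancel the tail, whose norm is at most `κ Rₙ < τ sₙ`.
So `Φ` is injective; being continuous on the compact space `Ξ`, it is an embedding.
-/

open Topology

section CodingMap

variable {E ι : Type*} [NormedAddCommGroup E]

lemma norm_le_tsum_tail_of_tsum_eq_zero {f : ℕ → E} {g : ℕ → ℝ} {n : ℕ}
    (hf : Summable f) (hf0 : ∑' i, f i = 0) (hlt : ∀ i < n, f i = 0)
    (hg : Summable g) (hfg : ∀ i, ‖f i‖ ≤ g i) :
    ‖f n‖ ≤ ∑' i, g (n + 1 + i) := by
  have hhead : ∑ i ∈ Finset.range (n + 1), f i = f n := by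
    rw [Finset.sum_range_succ, Finset.sum_eq_zero fun i hi => hlt i (Finset.mem_range.mp hi),
      zero_add]
  have htail : f n = -∑' i, f (n + 1 + i) := by
    rw [← hf.sum_add_tsum_nat_add (n + 1), hhead] at hf0
    simpa only [add_comm] using eq_neg_of_add_eq_zero_left hf0
  rw [htail, norm_neg]
  exact tsum_of_norm_bounded (hg.comp_injective (add_right_injective (n + 1))).hasSum
    fun i => hfg (n + 1 + i)

variable [NormedSpace ℝ E]

noncomputable def codingMap (s : ℕ → ℝ) (d : ℕ → ι → E) (σ : ℕ → ι) : E :=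
  ∑' i, s i • d i (σ i)

lemma norm_smul_le_of_norm_le {s C : ℝ} {x : E} (hs : 0 ≤ s) (hx : ‖x‖ ≤ C) :
    ‖s • x‖ ≤ s * C := by
  rw [norm_smul, Real.norm_of_nonneg hs]
  exact mul_le_mul_of_nonneg_left hx hs

lemma summable_codingSeries [CompleteSpace E] {s : ℕ → ℝ} {d : ℕ → ι → E} {C : ℝ}
    (hs : ∀ i, 0 ≤ s i) (hsum : Summable s) (hd : ∀ i j, ‖d i j‖ ≤ C) (σ : ℕ → ι) :
    Summable fun i => s i • d i (σ i) :=
  (hsum.mul_right C).of_norm_bounded fun i => norm_smul_le_of_norm_le (hs i) (hd i (σ i))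

lemma continuous_codingMap [CompleteSpace E] [TopologicalSpace ι] [DiscreteTopology ι]
    {s : ℕ → ℝ} {d : ℕ → ι → E} {C : ℝ}
    (hs : ∀ i, 0 ≤ s i) (hsum : Summable s) (hd : ∀ i j, ‖d i j‖ ≤ C) :
    Continuous (codingMap s d) :=
  continuous_tsum (fun i => (continuous_of_discreteTopology.comp (continuous_apply i)).const_smul _)
    (hsum.mul_right C) fun i σ => norm_smul_le_of_norm_le (hs i) (hd i (σ i))

lemma codingMap_injective {s : ℕ → ℝ} {d : ℕ → ι → E} {κ τ : ℝ}
    (hs : ∀ i, 0 ≤ s i) (hsum : Summable s)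
    (hΦ : ∀ σ : ℕ → ι, Summable fun i => s i • d i (σ i))
    (hκ : ∀ n i j, i ≠ j → ‖d n i - d n j‖ ≤ κ)
    (hτ : ∀ n i j, i ≠ j → τ ≤ ‖d n i - d n j‖)
    (hsep : ∀ n, κ * ∑' i, s (n + 1 + i) < τ * s n) :
    Function.Injective (codingMap s d) := by
  intro σ σ' hσ
  by_contra hne
  have hex : ∃ n, σ n ≠ σ' n := Function.ne_iff.mp hne
  classical
  set n := Nat.find hex
  have hn : σ n ≠ σ' n := Nat.find_spec hex
  have hκ0 : 0 ≤ κ := (norm_nonneg _).trans (hκ n _ _ hn)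
  set f := fun i => s i • d i (σ i) - s i • d i (σ' i)
  have hbound : ∀ i, ‖f i‖ ≤ s i * κ := by
    intro i
    by_cases h : σ i = σ' i
    · simpa [f, h] using mul_nonneg (hs i) hκ0
    · simpa only [f, ← smul_sub] using norm_smul_le_of_norm_le (hs i) (hκ i _ _ h)
  have hlow : τ * s n ≤ ‖f n‖ := by
    rw [show f n = s n • (d n (σ n) - d n (σ' n)) from (smul_sub ..).symm, norm_smul,
      Real.norm_of_nonneg (hs n), mul_comm]
    exact mul_le_mul_of_nonneg_left (hτ n _ _ hn) (hs n)
  have hup : ‖f n‖ ≤ κ * ∑' i, s (n + 1 + i) := by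
    rw [← tsum_mul_left]
    simp only [mul_comm κ]
    refine norm_le_tsum_tail_of_tsum_eq_zero ((hΦ σ).sub (hΦ σ')) ?_
      (fun i hi => by simp only [not_not.mp (Nat.find_min hex hi), sub_self])
      (hsum.mul_right κ) hbound
    rw [(hΦ σ).tsum_sub (hΦ σ')]
    exact sub_eq_zero.mpr hσ
  exact (hlow.trans hup).not_gt (hsep n)

end CodingMap

/-- Under the separation condition `sup_n κRₙ/(τ sₙ) = M < 1`, the map
`Φ : Ξ → ℝ^p` is injective, hence a homeomorphism onto its image `C_{s,𝒟}`
(equivalently, a topological embedding). -/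
theorem stmt_2 (p N : ℕ) (hN : 0 < N)
    (s : ℕ → ℝ) (hs : ∀ n, 0 < s n) (hsum : Summable s)
    (d : ℕ → Fin N → EuclideanSpace ℝ (Fin p))
    (hzero : ∀ n, d n ⟨0, hN⟩ = 0)
    (κ τ : ℝ) (hτ : 0 < τ)
    (hκ : ∀ (n : ℕ) (i j : Fin N), i ≠ j → ‖d n i - d n j‖ ≤ κ)
    (hτd : ∀ (n : ℕ) (i j : Fin N), i ≠ j → τ ≤ ‖d n i - d n j‖)
    (R : ℕ → ℝ) (hR : ∀ n, R n = ∑' i, s (n + 1 + i))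
    (M : ℝ) (hM : M < 1) (hsep : ∀ n, κ * R n ≤ M * (τ * s n)) :
    Function.Injective (fun σ : ℕ → Fin N => ∑' i, s i • d i (σ i)) ∧
      Topology.IsEmbedding (fun σ : ℕ → Fin N => ∑' i, s i • d i (σ i)) := by
  have hs0 : ∀ n, 0 ≤ s n := fun n => (hs n).le
  have hd : ∀ n j, ‖d n j‖ ≤ max κ 0 := by
    intro n j
    by_cases hj : j = ⟨0, hN⟩
    · simp [hj, hzero n]
    · simpa [hzero n] using (hκ n j _ hj).trans (le_max_left κ 0)
  have hsep' : ∀ n, κ * ∑' i, s (n + 1 + i) < τ * s n := fun n => by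
    rw [← hR n]
    exact (hsep n).trans_lt (mul_lt_of_lt_one_left (mul_pos hτ (hs n)) hM)
  have hinj : Function.Injective (codingMap s d) :=
    codingMap_injective hs0 hsum (summable_codingSeries hs0 hsum hd) hκ hτd hsep'
  exact ⟨hinj, ((continuous_codingMap hs0 hsum hd).isClosedEmbedding hinj).isEmbedding⟩
end

section
/- The generalized sum set C_{s,𝒟} = { ∑_{i=1}^∞ s_i b_i : b_i ∈ 𝒟^i } is a compact, perfect, totally disconnected subset of ℝ^p. -/
/-!
The coding map `σ ↦ ∑ sᵢ • dᵢ(σᵢ)` from the Cantor space `(Fin N)^ℕ` is continuous, the series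
converging uniformly, and the separation condition makes it injective: if `σ` and `σ'` first
differ at `n`, their `n`-th terms are at least `τ sₙ` apart, while all later terms together move
the sum by at most `κ Rₙ < τ sₙ`. A continuous injection of a compact space into a Hausdorff space
is an embedding, so its image inherits compactness, the absence of isolated points and total
disconnectedness from the Cantor space.
-/

open Filter Topology

theorem norm_sub_tsum_norm_le_norm_tsum {E : Type*} [NormedAddCommGroup E] [CompleteSpace E]
    {g : ℕ → E} (hg : Summable fun i => ‖g i‖) {n : ℕ} (hlt : ∀ i < n, g i = 0) :
    ‖g n‖ - ∑' i, ‖g (n + 1 + i)‖ ≤ ‖∑' i, g i‖ := by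
  have htail : Summable fun i => ‖g (n + 1 + i)‖ :=
    ((summable_nat_add_iff (n + 1)).2 hg).congr fun i => by rw [add_comm]
  have hsplit : ∑' i, g i = g n + ∑' i, g (n + 1 + i) := by
    rw [← hg.of_norm.sum_add_tsum_nat_add (n + 1), Finset.sum_range_succ,
      Finset.sum_eq_zero fun i hi => hlt i (Finset.mem_range.1 hi), zero_add]
    simp_rw [add_comm _ (n + 1)]
  calc ‖g n‖ - ∑' i, ‖g (n + 1 + i)‖ ≤ ‖g n‖ - ‖∑' i, g (n + 1 + i)‖ := by
        gcongr; exact norm_tsum_le_tsum_norm htail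
    _ ≤ ‖∑' i, g i‖ := by rw [hsplit]; exact norm_sub_le_norm_add _ _

instance {α ι : Type*} [Infinite α] [TopologicalSpace ι] [Nontrivial ι] :
    PerfectSpace (α → ι) := by
  classical
  refine perfectSpace_iff_forall_not_isolated.2 fun σ => ?_
  choose other hother using fun i : ι => exists_ne i
  have : Tendsto (fun k => Function.update σ k (other (σ k))) cofinite (𝓝[≠] σ) := by
    refine tendsto_nhdsWithin_iff.2 ⟨tendsto_pi_nhds.2 fun i => ?_, Eventually.of_forall fun k => ?_⟩
    · exact tendsto_const_nhds.congr'
        ((eventually_cofinite_ne i).mono fun k hk => (Function.update_of_ne hk.symm _ _).symm)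
    · intro h
      exact hother (σ k) (by simpa using congrFun h k)
  exact this.neBot

theorem preperfect_range_of_continuous_of_injective {X Y : Type*} [TopologicalSpace X]
    [TopologicalSpace Y] [PerfectSpace X] {f : X → Y} (hf : Continuous f)
    (hinj : Function.Injective f) : Preperfect (Set.range f) := by
  rw [preperfect_iff_nhds]
  rintro _ ⟨x, rfl⟩ U hU
  obtain ⟨y, ⟨hyU, -⟩, hyx⟩ := preperfect_iff_nhds.1 PerfectSpace.univ_preperfect x trivial _
    (hf.continuousAt.preimage_mem_nhds hU)
  exact ⟨f y, ⟨hyU, y, rfl⟩, hinj.ne hyx⟩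

section DigitSeries

variable {E ι : Type*} [NormedAddCommGroup E] [NormedSpace ℝ E]
  {s : ℕ → ℝ} {d : ℕ → ι → E} {C κ τ : ℝ}

noncomputable def digitSeries (s : ℕ → ℝ) (d : ℕ → ι → E) (σ : ℕ → ι) : E :=
  ∑' n, s n • d n (σ n)

theorem norm_smul_digit_le (hd : ∀ n i, ‖d n i‖ ≤ C) (n : ℕ) (i : ι) :
    ‖s n • d n i‖ ≤ |s n| * C := by
  rw [norm_smul, Real.norm_eq_abs]
  exact mul_le_mul_of_nonneg_left (hd n i) (abs_nonneg _)

variable [CompleteSpace E]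

theorem summable_digitSeries (hsum : Summable s) (hd : ∀ n i, ‖d n i‖ ≤ C) (σ : ℕ → ι) :
    Summable fun n => s n • d n (σ n) :=
  (hsum.abs.mul_right C).of_norm_bounded fun n => norm_smul_digit_le hd n (σ n)

theorem continuous_digitSeries [TopologicalSpace ι] [DiscreteTopology ι] (hsum : Summable s)
    (hd : ∀ n i, ‖d n i‖ ≤ C) : Continuous (digitSeries s d) :=
  continuous_tsum
    (fun n => (continuous_of_discreteTopology.comp (continuous_apply n)).const_smul (s n))
    (hsum.abs.mul_right C) fun n σ => norm_smul_digit_le hd n (σ n)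

theorem sub_le_norm_digitSeries_sub (hs : ∀ n, 0 ≤ s n) (hsum : Summable s)
    (hd : ∀ n i, ‖d n i‖ ≤ C) (hdiam : ∀ n i j, ‖d n i - d n j‖ ≤ κ)
    (hτ : ∀ n i j, i ≠ j → τ ≤ ‖d n i - d n j‖) {σ σ' : ℕ → ι} {n : ℕ}
    (hagree : ∀ i < n, σ i = σ' i) (hne : σ n ≠ σ' n) :
    τ * s n - κ * ∑' i, s (n + 1 + i) ≤ ‖digitSeries s d σ - digitSeries s d σ'‖ := by
  set g : ℕ → E := fun i => s i • (d i (σ i) - d i (σ' i))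
  have hg : ∀ i, ‖g i‖ = s i * ‖d i (σ i) - d i (σ' i)‖ := fun i => by
    rw [norm_smul, Real.norm_of_nonneg (hs i)]
  have hgκ : ∀ i, ‖g i‖ ≤ κ * s i := fun i => by
    rw [hg, mul_comm]; exact mul_le_mul_of_nonneg_right (hdiam _ _ _) (hs i)
  have hsub : digitSeries s d σ - digitSeries s d σ' = ∑' i, g i := by
    rw [digitSeries, digitSeries,
      ← (summable_digitSeries hsum hd σ).tsum_sub (summable_digitSeries hsum hd σ')]
    simp_rw [g, smul_sub]
  have hκs : Summable fun i => κ * s (n + 1 + i) :=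
    (((summable_nat_add_iff (n + 1)).2 hsum).congr fun i => by rw [add_comm]).mul_left κ
  have htail : ∑' i, ‖g (n + 1 + i)‖ ≤ κ * ∑' i, s (n + 1 + i) := by
    rw [← tsum_mul_left]
    exact Summable.tsum_le_tsum (fun i => hgκ _)
      (hκs.of_nonneg_of_le (fun _ => norm_nonneg _) fun i => hgκ _) hκs
  have hhead : τ * s n ≤ ‖g n‖ := by
    rw [hg, mul_comm τ]; exact mul_le_mul_of_nonneg_left (hτ n _ _ hne) (hs n)
  calc τ * s n - κ * ∑' i, s (n + 1 + i) ≤ ‖g n‖ - ∑' i, ‖g (n + 1 + i)‖ := by linarith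
    _ ≤ ‖digitSeries s d σ - digitSeries s d σ'‖ := by
      rw [hsub]
      exact norm_sub_tsum_norm_le_norm_tsum
        (Summable.of_nonneg_of_le (fun _ => norm_nonneg _) hgκ (hsum.mul_left κ))
        fun i hi => by simp [g, hagree i hi]

theorem injective_digitSeries (hs : ∀ n, 0 ≤ s n) (hsum : Summable s)
    (hd : ∀ n i, ‖d n i‖ ≤ C) (hdiam : ∀ n i j, ‖d n i - d n j‖ ≤ κ)
    (hτ : ∀ n i j, i ≠ j → τ ≤ ‖d n i - d n j‖)
    (hsep : ∀ n, κ * ∑' i, s (n + 1 + i) < τ * s n) : Function.Injective (digitSeries s d) := by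
  intro σ σ' heq
  by_contra hne
  have := sub_le_norm_digitSeries_sub hs hsum hd hdiam hτ
    (fun i hi => PiNat.apply_eq_of_lt_firstDiff hi) (PiNat.apply_firstDiff_ne hne)
  rw [heq, sub_self, norm_zero] at this
  linarith [hsep (PiNat.firstDiff σ σ')]

end DigitSeries

/-- The generalized sum set `C_{s,𝒟} = {∑ᵢ sᵢ bᵢ : bᵢ ∈ 𝒟^i}` is a compact,
perfect, totally disconnected subset of `ℝ^p`. -/
theorem stmt_3 (p N : ℕ) (hN : 2 ≤ N)
    (s : ℕ → ℝ) (hs : ∀ n, 0 < s n) (hsum : Summable s)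
    (d : ℕ → Fin N → EuclideanSpace ℝ (Fin p))
    (hzero : ∀ n, d n ⟨0, by omega⟩ = 0)
    (κ τ : ℝ) (hτ : 0 < τ)
    (hκ : ∀ (n : ℕ) (i j : Fin N), i ≠ j → ‖d n i - d n j‖ ≤ κ)
    (hτd : ∀ (n : ℕ) (i j : Fin N), i ≠ j → τ ≤ ‖d n i - d n j‖)
    (R : ℕ → ℝ) (hR : ∀ n, R n = ∑' i, s (n + 1 + i))
    (M : ℝ) (hM : M < 1) (hsep : ∀ n, κ * R n ≤ M * (τ * s n)) :
    IsCompact (Set.range fun σ : ℕ → Fin N => ∑' i, s i • d i (σ i)) ∧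
      Perfect (Set.range fun σ : ℕ → Fin N => ∑' i, s i • d i (σ i)) ∧
      IsTotallyDisconnected (Set.range fun σ : ℕ → Fin N => ∑' i, s i • d i (σ i)) := by
  have : Nontrivial (Fin N) := Fin.nontrivial_iff_two_le.2 hN
  have hκ0 : 0 ≤ κ := by
    obtain ⟨i, j, hij⟩ := exists_pair_ne (Fin N)
    exact hτ.le.trans ((hτd 0 i j hij).trans (hκ 0 i j hij))
  have hdiam : ∀ n i j, ‖d n i - d n j‖ ≤ κ := fun n i j => by
    rcases eq_or_ne i j with rfl | hij
    · simpa using hκ0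
    · exact hκ n i j hij
  have hd : ∀ n i, ‖d n i‖ ≤ κ := fun n i => by simpa [hzero] using hdiam n i ⟨0, by omega⟩
  have hsep' : ∀ n, κ * ∑' i, s (n + 1 + i) < τ * s n := fun n =>
    hR n ▸ (hsep n).trans_lt (mul_lt_of_lt_one_left (mul_pos hτ (hs n)) hM)
  have hcont := continuous_digitSeries hsum hd
  have hinj := injective_digitSeries (fun n => (hs n).le) hsum hd hdiam hτd hsep'
  have hcompact : IsCompact (Set.range (digitSeries s d)) := isCompact_range hcont
  exact ⟨hcompact, ⟨hcompact.isClosed, preperfect_range_of_continuous_of_injective hcont hinj⟩,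
    (hcont.isClosedEmbedding hinj).isEmbedding.isTotallyDisconnected_range.2 inferInstance⟩
end

section
/- If h is a dimension function and liminf_n N^n h(κ R_n) = α, then the h-Hausdorff measure of C_{s,𝒟} satisfies ℋ^h(C_{s,𝒟}) ≤ α. -/
/-!
Points of `C_{s,𝒟}` whose digit sequences agree in the first `n` places differ only in the
tail `∑_{i ≥ n} sᵢ (b_i - b'_i)`, so they lie within distance `κ Rₙ` of each other. Hence the
`Nⁿ` cylinder sets of level `n` cover `C_{s,𝒟}` by sets of diameter at most `κ Rₙ → 0`, and
the covering bound for `mkMetric` gives `ℋ^h(C_{s,𝒟}) ≤ liminf Nⁿ h(κ Rₙ)`.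
-/

open MeasureTheory Filter Topology Set Metric
open scoped ENNReal

theorem mkMetric_le_liminf_card_mul {X : Type*} [EMetricSpace X] [MeasurableSpace X]
    [BorelSpace X] {ι : ℕ → Type*} [∀ n, Fintype (ι n)] {S : Set X} {t : ∀ n, ι n → Set X}
    {r c : ℕ → ℝ≥0∞} (hr : Tendsto r atTop (𝓝 0)) (htr : ∀ n i, ediam (t n i) ≤ r n)
    (hS : ∀ n, S ⊆ ⋃ i, t n i) (m : ℝ≥0∞ → ℝ≥0∞) (hmc : ∀ n i, m (ediam (t n i)) ≤ c n) :
    Measure.mkMetric m S ≤ atTop.liminf fun n => Fintype.card (ι n) * c n := by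
  refine (Measure.mkMetric_le_liminf_sum S r hr t (.of_forall htr) (.of_forall hS) m).trans ?_
  refine liminf_le_liminf (.of_forall fun n => ?_)
  calc ∑ i, m (ediam (t n i)) ≤ ∑ _i : ι n, c n := Finset.sum_le_sum fun i _ => hmc n i
    _ = Fintype.card (ι n) * c n := by rw [Finset.sum_const, nsmul_eq_mul, Finset.card_univ]

section DigitExpansion

variable {E ι : Type*} [NormedAddCommGroup E] [NormedSpace ℝ E] {s : ℕ → ℝ}

theorem summable_smul_of_norm_le [CompleteSpace E] {v : ℕ → E} {K : ℝ} (hs : ∀ n, 0 ≤ s n)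
    (hsum : Summable s) (hv : ∀ n, ‖v n‖ ≤ K) : Summable fun n => s n • v n :=
  Summable.of_norm_bounded (hsum.mul_right K) fun n => by
    rw [norm_smul, Real.norm_of_nonneg (hs n)]
    exact mul_le_mul_of_nonneg_left (hv n) (hs n)

theorem norm_tsum_smul_sub_tsum_smul_le {u v : ℕ → E} {K : ℝ} {n : ℕ} (hs : ∀ i, 0 ≤ s i)
    (hsum : Summable s) (hu : Summable fun i => s i • u i) (hv : Summable fun i => s i • v i)
    (huv : ∀ i, ‖u i - v i‖ ≤ K) (hagree : ∀ i < n, u i = v i) :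
    ‖∑' i, s i • u i - ∑' i, s i • v i‖ ≤ K * ∑' i, s (n + i) := by
  set g : ℕ → E := fun i => s i • (u i - v i)
  have hg : Summable g := by simpa only [g, smul_sub] using hu.sub hv
  have hhead : ∑ i ∈ Finset.range n, g i = 0 :=
    Finset.sum_eq_zero fun i hi => by simp [g, hagree i (Finset.mem_range.mp hi)]
  have htail : ∑' i, s i • u i - ∑' i, s i • v i = ∑' i, g (i + n) := by
    rw [← hu.tsum_sub hv]
    simp only [← smul_sub]
    change ∑' i, g i = _
    rw [← hg.sum_add_tsum_nat_add n, hhead, zero_add]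
  rw [htail]
  refine tsum_of_norm_bounded ((hsum.comp_injective (add_right_injective n)).hasSum.mul_left K)
    fun i => ?_
  rw [norm_smul, Real.norm_of_nonneg (hs _), add_comm, mul_comm]
  exact mul_le_mul_of_nonneg_right (huv _) (hs _)

def digitCylinder (n : ℕ) (f : Fin n → ι) : Set (ℕ → ι) := {σ | ∀ i : Fin n, σ i = f i}

theorem iUnion_image_digitCylinder {X : Type*} (F : (ℕ → ι) → X) (n : ℕ) :
    ⋃ f : Fin n → ι, F '' digitCylinder n f = range F := by
  refine Subset.antisymm (iUnion_subset fun f => image_subset_range F _) ?_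
  rintro _ ⟨σ, rfl⟩
  exact mem_iUnion.mpr ⟨fun i => σ i, mem_image_of_mem F fun _ => rfl⟩

theorem ediam_image_digitCylinder_le {d : ℕ → ι → E} {K : ℝ} (hs : ∀ i, 0 ≤ s i)
    (hsum : Summable s) (hF : ∀ σ : ℕ → ι, Summable fun i => s i • d i (σ i))
    (hd : ∀ n i j, ‖d n i - d n j‖ ≤ K) (n : ℕ) (f : Fin n → ι) :
    ediam ((fun σ => ∑' i, s i • d i (σ i)) '' digitCylinder n f) ≤
      ENNReal.ofReal (K * ∑' i, s (n + i)) := by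
  refine ediam_le ?_
  rintro _ ⟨σ, hσ, rfl⟩ _ ⟨τ, hτ, rfl⟩
  rw [edist_dist, dist_eq_norm]
  refine ENNReal.ofReal_le_ofReal (norm_tsum_smul_sub_tsum_smul_le hs hsum (hF σ) (hF τ)
    (fun i => hd i _ _) fun i hi => ?_)
  rw [hσ ⟨i, hi⟩, hτ ⟨i, hi⟩]

end DigitExpansion

theorem ofReal_apply_toReal_le_of_le_ofReal_max_mul {h : ℝ → ℝ} (hmono : Monotone h)
    (h0 : h 0 = 0) {D : ℝ≥0∞} {κ R : ℝ} (hR : 0 ≤ R) (hD : D ≤ ENNReal.ofReal (max κ 0 * R)) :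
    ENNReal.ofReal (h D.toReal) ≤ ENNReal.ofReal (h (κ * R)) := by
  have hD' : D.toReal ≤ max κ 0 * R :=
    ENNReal.toReal_le_of_le_ofReal (by positivity) hD
  rcases le_or_gt 0 κ with hκ | hκ
  · rw [max_eq_left hκ] at hD'
    exact ENNReal.ofReal_le_ofReal (hmono hD')
  · rw [max_eq_right hκ.le, zero_mul] at hD'
    rw [ENNReal.ofReal_of_nonpos ((hmono hD').trans h0.le)]
    positivity

theorem stmt_6_general (p N : ℕ) (hN : 0 < N)
    (s : ℕ → ℝ) (hs : ∀ n, 0 < s n) (hsum : Summable s)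
    (d : ℕ → Fin N → EuclideanSpace ℝ (Fin p))
    (hzero : ∀ n, d n ⟨0, hN⟩ = 0)
    (κ : ℝ) (hκ : ∀ (n : ℕ) (i j : Fin N), i ≠ j → ‖d n i - d n j‖ ≤ κ)
    (R : ℕ → ℝ) (hR : ∀ n, R n = ∑' i, s (n + i))
    (h : ℝ → ℝ) (hmono : Monotone h) (h0 : h 0 = 0)
    (α : ℝ≥0∞)
    (hα : Filter.atTop.liminf (fun n => (N : ℝ≥0∞) ^ n * ENNReal.ofReal (h (κ * R n))) = α) :
    Measure.mkMetric (fun r : ℝ≥0∞ => ENNReal.ofReal (h r.toReal))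
        (Set.range fun σ : ℕ → Fin N => ∑' i, s i • d i (σ i)) ≤ α := by
  have hs' : ∀ n, 0 ≤ s n := fun n => (hs n).le
  -- `κ < 0` is possible only for `N = 1`, when cylinders are points and `h 0 = 0` is what is used.
  have hd : ∀ n (i j : Fin N), ‖d n i - d n j‖ ≤ max κ 0 := fun n i j => by
    rcases eq_or_ne i j with rfl | hij
    · simp
    · exact (hκ n i j hij).trans (le_max_left _ _)
  have hF : ∀ σ : ℕ → Fin N, Summable fun i => s i • d i (σ i) := fun σ =>
    summable_smul_of_norm_le hs' hsum fun i => by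
      simpa only [hzero, sub_zero] using hd i (σ i) ⟨0, hN⟩
  have hR0 : Tendsto R atTop (𝓝 0) :=
    (tendsto_sum_nat_add s).congr fun n => by simp only [hR, add_comm]
  have hr : Tendsto (fun n => ENNReal.ofReal (max κ 0 * R n)) atTop (𝓝 0) := by
    simpa using ENNReal.tendsto_ofReal (hR0.const_mul (max κ 0))
  have hdiam := ediam_image_digitCylinder_le hs' hsum hF hd
  simp only [← hR] at hdiam
  calc Measure.mkMetric _ _
      ≤ atTop.liminf fun n => Fintype.card (Fin n → Fin N) * ENNReal.ofReal (h (κ * R n)) :=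
        mkMetric_le_liminf_card_mul hr hdiam (fun n => (iUnion_image_digitCylinder _ n).ge) _
          fun n f => ofReal_apply_toReal_le_of_le_ofReal_max_mul hmono h0
            (hR n ▸ tsum_nonneg fun i => hs' _) (hdiam n f)
    _ = α := by simpa using hα

/-- If `h` is a dimension function and `liminf_n N^n h(κRₙ) = α`, then the
`h`-Hausdorff measure of `C_{s,𝒟}` is at most `α`.  Here `Rₙ = ∑_{i ≥ n} sᵢ` is the tail
of the series after the first `n` terms, and the `h`-Hausdorff measure is the metric
(outer) measure built from the gauge `B ↦ h(diam B)`. -/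
theorem stmt_6 (p N : ℕ) (hN : 0 < N)
    (s : ℕ → ℝ) (hs : ∀ n, 0 < s n) (hsum : Summable s)
    (d : ℕ → Fin N → EuclideanSpace ℝ (Fin p))
    (hzero : ∀ n, d n ⟨0, hN⟩ = 0)
    (κ : ℝ) (hκ : ∀ (n : ℕ) (i j : Fin N), i ≠ j → ‖d n i - d n j‖ ≤ κ)
    (R : ℕ → ℝ) (hR : ∀ n, R n = ∑' i, s (n + i))
    (h : ℝ → ℝ) (hcont : Continuous h) (hmono : Monotone h) (h0 : h 0 = 0)
    (hnonneg : ∀ x, 0 ≤ h x)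
    (α : ℝ≥0∞)
    (hα : Filter.atTop.liminf (fun n => (N : ℝ≥0∞) ^ n * ENNReal.ofReal (h (κ * R n))) = α) :
    Measure.mkMetric (fun r : ℝ≥0∞ => ENNReal.ofReal (h r.toReal))
        (Set.range fun σ : ℕ → Fin N => ∑' i, s i • d i (σ i)) ≤ α :=
  stmt_6_general p N hN s hs hsum d hzero κ hκ R hR h hmono h0 α hα
end

section
/- The function h defined by h(x) = 1/f^{-1}(x), with f the piecewise-linear interpolation of f(N^n) = κ R_n, satisfies the doubling condition: h(2x) ≤ N^{2 − ln 2 / ln θ} h(x) for all small x > 0, where θ = τM/κ < 1. -/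
/-- The function `h` defined by `h(x) = 1/f⁻¹(x)`, with `f` the
piecewise-linear interpolation of `f(N^n) = κRₙ`, satisfies the doubling condition
`h(2x) ≤ N^{2 − ln 2 / ln θ} h(x)` for all small `x > 0`, where `θ = τM/κ < 1`.
Here `Rₙ = ∑_{i ≥ n} sᵢ` is the tail of the series after the first `n` terms, and the
relation `h(f(y)) = 1/y` for `y ≥ 1` encodes `h = 1/f⁻¹` on `(0, κR₀]`. -/
theorem stmt_12 (N : ℕ) (hN : 2 ≤ N)
    (s : ℕ → ℝ) (hs : ∀ n, 0 < s n) (hsum : Summable s)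
    (R : ℕ → ℝ) (hR : ∀ n, R n = ∑' i, s (n + i))
    (κ τ M : ℝ) (hτ : 0 < τ) (hτκ : τ ≤ κ) (hM : M < 1)
    (hsep : ∀ n, κ * R (n + 1) ≤ M * (τ * s n))
    (θ : ℝ) (hθ : θ = τ * M / κ)
    (f h : ℝ → ℝ)
    (hf : ∀ n : ℕ, ∀ x ∈ Set.Ico ((N : ℝ) ^ n) ((N : ℝ) ^ (n + 1)),
      f x = κ * R n + (κ * R (n + 1) - κ * R n) * (x - (N : ℝ) ^ n) /
        ((N : ℝ) ^ (n + 1) - (N : ℝ) ^ n))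
    (hzero : h 0 = 0)
    (hinv : ∀ y : ℝ, 1 ≤ y → h (f y) = 1 / y) :
    ∀ x : ℝ, 0 < x → 2 * x ≤ κ * R 0 →
      h (2 * x) ≤ (N : ℝ) ^ (2 - Real.log 2 / Real.log θ) * h x := by
  classical
  have hκ : (0:ℝ) < κ := lt_of_lt_of_le hτ hτκ
  have hN1 : (1:ℝ) < (N:ℝ) := by exact_mod_cast lt_of_lt_of_le one_lt_two hN
  have hNR : (1:ℝ) ≤ (N:ℝ) := hN1.le
  have hNpos : (0:ℝ) < (N:ℝ) := lt_of_lt_of_le one_pos hNR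
  -- summability of tails
  have hsumn : ∀ n, Summable (fun i => s (n + i)) := by
    intro n
    have := (summable_nat_add_iff n).2 hsum
    simpa [add_comm] using this
  -- positivity of tails
  have hRpos : ∀ n, 0 < R n := by
    intro n
    rw [hR n]
    exact Summable.tsum_pos (hsumn n) (fun i => (hs _).le) 0 (hs _)
  -- recursion R n = s n + R (n+1)
  have hstep : ∀ n, R n = s n + R (n + 1) := by
    intro n
    rw [hR n, Summable.tsum_eq_zero_add (hsumn n), hR (n + 1)]
    have e1 : n + 0 = n := by omega
    rw [e1]
    congr 1
    apply tsum_congr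
    intro i
    congr 1
    omega
  have hRdec : ∀ n, R (n + 1) < R n := by
    intro n
    have := hstep n
    nlinarith [hs n]
  have hRanti : ∀ {a b : ℕ}, a ≤ b → R b ≤ R a := by
    intro a b hab
    induction b with
    | zero =>
      have : a = 0 := Nat.le_zero.mp hab
      rw [this]
    | succ b ih =>
      rcases Nat.lt_or_ge a (b+1) with hlt | hge
      · exact le_trans (hRdec b).le (ih (by omega))
      · have : a = b + 1 := le_antisymm hab hge
        rw [this]
  -- M positive
  have hMpos : 0 < M := by
    by_contra hcon
    push_neg at hcon
    have h1 : M * (τ * s 0) ≤ 0 * (τ * s 0) :=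
      mul_le_mul_of_nonneg_right hcon (mul_pos hτ (hs 0)).le
    have h2 := hsep 0
    have h3 := mul_pos hκ (hRpos 1)
    rw [zero_mul] at h1
    linarith
  have hθpos : 0 < θ := by rw [hθ]; positivity
  have hθ1 : θ < 1 := by
    rw [hθ, div_lt_one hκ]
    nlinarith
  -- tail contraction
  have hRθ : ∀ n, R (n + 1) ≤ θ * R n := by
    intro n
    have h1 := hsep n
    have hsR : s n ≤ R n := by
      have := hstep n
      nlinarith [hRpos (n+1)]
    have h2 : M * (τ * s n) ≤ M * (τ * R n) := by
      apply mul_le_mul_of_nonneg_left _ hMpos.le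
      exact mul_le_mul_of_nonneg_left hsR hτ.le
    rw [hθ, div_mul_eq_mul_div, le_div_iff₀ hκ]
    nlinarith
  have hRpowθ : ∀ a k : ℕ, R (a + k) ≤ θ ^ k * R a := by
    intro a k
    induction k with
    | zero => simp
    | succ k ih =>
      have h1 : R (a + k + 1) ≤ θ * R (a + k) := hRθ (a + k)
      have h2 : θ * R (a + k) ≤ θ * (θ ^ k * R a) :=
        mul_le_mul_of_nonneg_left ih hθpos.le
      calc R (a + (k + 1)) = R (a + k + 1) := rfl
        _ ≤ θ * (θ ^ k * R a) := le_trans h1 h2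
        _ = θ ^ (k + 1) * R a := by ring
  -- powers of N facts
  have hNpow_lt : ∀ n : ℕ, (N:ℝ) ^ n < (N:ℝ) ^ (n + 1) := by
    intro n
    exact pow_lt_pow_right₀ hN1 (by omega)
  have hNpow1 : ∀ n : ℕ, (1:ℝ) ≤ (N:ℝ) ^ n := fun n => one_le_pow₀ hNR
  -- the inverse construction: every x ∈ (0, κ R 0] is attained, with interval data
  have hkey : ∀ x : ℝ, 0 < x → x ≤ κ * R 0 →
      ∃ (n : ℕ) (y : ℝ), (N:ℝ) ^ n ≤ y ∧ y < (N:ℝ) ^ (n + 1) ∧ f y = x ∧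
        κ * R (n + 1) < x ∧ x ≤ κ * R n := by
    intro x hx hx0
    -- there exists n with κ R (n+1) < x
    have hexist : ∃ n : ℕ, κ * R (n + 1) < x := by
      have hκR0 : (0:ℝ) < κ * R 0 := mul_pos hκ (hRpos 0)
      obtain ⟨k, hk⟩ := exists_pow_lt_of_lt_one (div_pos hx hκR0) hθ1
      refine ⟨k, ?_⟩
      have h5 : θ ^ k * (κ * R 0) < x := by
        have h6 := mul_lt_mul_of_pos_right hk hκR0
        rwa [div_mul_cancel₀ _ hκR0.ne'] at h6
      calc κ * R (k + 1) ≤ κ * R k := mul_le_mul_of_nonneg_left (hRdec k).le hκ.le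
        _ ≤ κ * (θ ^ k * R 0) := by
            apply mul_le_mul_of_nonneg_left _ hκ.le
            have := hRpowθ 0 k
            simpa using this
        _ = θ ^ k * (κ * R 0) := by ring
        _ < x := h5
    have hmin : ∃ n : ℕ, κ * R (n + 1) < x ∧ x ≤ κ * R n := by
      refine ⟨Nat.find hexist, Nat.find_spec hexist, ?_⟩
      rcases Nat.eq_zero_or_pos (Nat.find hexist) with h0 | h0
      · rw [h0]; exact hx0
      · have hlt := Nat.find_min hexist (m := Nat.find hexist - 1) (by omega)
        push_neg at hlt
        have he : Nat.find hexist - 1 + 1 = Nat.find hexist := by omega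
        rwa [he] at hlt
    obtain ⟨n, hnlt, hnle⟩ := hmin
    obtain ⟨a, ha⟩ : ∃ t : ℝ, t = κ * R n := ⟨_, rfl⟩
    obtain ⟨b, hb⟩ : ∃ t : ℝ, t = κ * R (n + 1) := ⟨_, rfl⟩
    obtain ⟨P, hP⟩ : ∃ t : ℝ, t = (N:ℝ) ^ n := ⟨_, rfl⟩
    obtain ⟨Q, hQ⟩ : ∃ t : ℝ, t = (N:ℝ) ^ (n + 1) := ⟨_, rfl⟩
    rw [← ha] at hnle
    rw [← hb] at hnlt
    have hba : b < a := by
      rw [ha, hb]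
      exact mul_lt_mul_of_pos_left (hRdec n) hκ
    have hPQ : P < Q := by rw [hP, hQ]; exact hNpow_lt n
    have hba' : b - a < 0 := by linarith
    have hQP' : 0 < Q - P := by linarith
    have hba0 : b - a ≠ 0 := ne_of_lt hba'
    have hQP0 : Q - P ≠ 0 := ne_of_gt hQP'
    obtain ⟨y, hy⟩ : ∃ t : ℝ, t = P + (x - a) * (Q - P) / (b - a) := ⟨_, rfl⟩
    have hyge : P ≤ y := by
      have hnum : (x - a) * (Q - P) ≤ 0 :=
        mul_nonpos_of_nonpos_of_nonneg (by linarith) hQP'.le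
      have hq : 0 ≤ (x - a) * (Q - P) / (b - a) := by
        rw [div_nonneg_iff]
        right
        exact ⟨hnum, hba'.le⟩
      linarith [hy.ge, hy.le]
    have hylt : y < Q := by
      have h1 : (x - a) * (Q - P) / (b - a) < Q - P := by
        rw [div_lt_iff_of_neg hba']
        nlinarith
      linarith [hy.le, hy.ge]
    have hfy : f y = x := by
      have hmem : y ∈ Set.Ico ((N:ℝ) ^ n) ((N:ℝ) ^ (n + 1)) := by
        constructor
        · rw [← hP]; exact hyge
        · rw [← hQ]; exact hylt
      have hfval := hf n y hmem
      rw [← ha, ← hb, ← hP, ← hQ] at hfval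
      rw [hfval, hy]
      field_simp
      ring
    refine ⟨n, y, ?_, ?_, hfy, ?_, ?_⟩
    · rw [← hP]; exact hyge
    · rw [← hQ]; exact hylt
    · rw [hb] at hnlt; exact hnlt
    · rw [ha] at hnle; exact hnle
  -- the doubling bound
  intro x hx hx2
  have hx0 : x ≤ κ * R 0 := by linarith
  obtain ⟨n, y1, hy1l, hy1r, hfy1, hxb, hxa⟩ := hkey x hx hx0
  obtain ⟨k, y2, hy2l, hy2r, hfy2, h2xb, h2xa⟩ := hkey (2 * x) (by linarith) hx2
  have hy1pos : (0:ℝ) < y1 := lt_of_lt_of_le (lt_of_lt_of_le one_pos (hNpow1 n)) hy1l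
  have hy2pos : (0:ℝ) < y2 := lt_of_lt_of_le (lt_of_lt_of_le one_pos (hNpow1 k)) hy2l
  have hy1one : (1:ℝ) ≤ y1 := le_trans (hNpow1 n) hy1l
  have hy2one : (1:ℝ) ≤ y2 := le_trans (hNpow1 k) hy2l
  have hhx : h x = 1 / y1 := by rw [← hfy1]; exact hinv y1 hy1one
  have hh2x : h (2 * x) = 1 / y2 := by rw [← hfy2]; exact hinv y2 hy2one
  -- logarithmic quantities
  have hlogθ : Real.log θ < 0 := Real.log_neg hθpos hθ1
  have hlog2 : (0:ℝ) < Real.log 2 := Real.log_pos one_lt_two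
  set L := Real.log 2 / (-Real.log θ) with hL
  have hLpos : 0 < L := div_pos hlog2 (by linarith)
  set m := ⌈L⌉₊ with hm
  have hmL : L ≤ (m:ℝ) := Nat.le_ceil L
  have hmL1 : (m:ℝ) < L + 1 := Nat.ceil_lt_add_one hLpos.le
  -- θ ^ m ≤ 1/2
  have hθm : θ ^ m ≤ 1 / 2 := by
    have h1 : Real.log 2 ≤ (m:ℝ) * (-Real.log θ) := by
      have h2 := mul_le_mul_of_nonneg_right hmL (by linarith : (0:ℝ) ≤ -Real.log θ)
      rw [hL, div_mul_cancel₀ _ (by linarith : -Real.log θ ≠ 0)] at h2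
      exact h2
    have h2 : Real.log (θ ^ m) ≤ Real.log (1 / 2) := by
      have hlp : Real.log (θ ^ m) = (m:ℝ) * Real.log θ := by
        rw [Real.log_pow]
      rw [hlp, Real.log_div one_ne_zero two_ne_zero, Real.log_one]
      linarith
    have h3 : (0:ℝ) < θ ^ m := pow_pos hθpos m
    exact (Real.log_le_log_iff h3 (by norm_num)).1 h2
  have hc : 2 - Real.log 2 / Real.log θ = 2 + L := by
    rw [hL, div_neg]
    ring
  -- key: y1 ≤ N^c * y2  where c = 2 - log 2 / log θ
  have hmain : y1 ≤ (N:ℝ) ^ (2 - Real.log 2 / Real.log θ) * y2 := by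
    rw [hc]
    rcases Nat.lt_or_ge n m with hnm | hnm
    · -- small n: y2 ≥ 1, y1 < N^(n+1) ≤ N^(2+L)
      have h1 : y1 < (N:ℝ) ^ (n + 1) := hy1r
      have h2 : (N:ℝ) ^ (n + 1) ≤ (N:ℝ) ^ ((2:ℝ) + L) := by
        have e1 : ((N:ℝ)) ^ (n+1) = (N:ℝ) ^ (((n+1:ℕ):ℝ)) := by
          rw [Real.rpow_natCast]
        rw [e1]
        apply Real.rpow_le_rpow_of_exponent_le hNR
        have h3 : ((n:ℝ)) + 1 ≤ (m:ℝ) := by exact_mod_cast hnm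
        push_cast
        linarith
      have h3 : (N:ℝ) ^ ((2:ℝ) + L) ≤ (N:ℝ) ^ ((2:ℝ) + L) * y2 := by
        nth_rewrite 1 [← mul_one ((N:ℝ) ^ ((2:ℝ) + L))]
        apply mul_le_mul_of_nonneg_left hy2one
        positivity
      linarith
    · -- n ≥ m: show n - m ≤ k
      have hRn : 2 * R n ≤ R (n - m) := by
        have h1 : R n ≤ θ ^ m * R (n - m) := by
          have h4 := hRpowθ (n - m) m
          have he : n - m + m = n := by omega
          rwa [he] at h4
        have h2 : θ ^ m * R (n - m) ≤ (1/2) * R (n - m) :=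
          mul_le_mul_of_nonneg_right hθm (hRpos (n - m)).le
        linarith
      have h2x : 2 * x ≤ κ * R (n - m) := by
        calc 2 * x ≤ κ * (2 * R n) := by linarith [hxa]
          _ ≤ κ * R (n - m) := mul_le_mul_of_nonneg_left hRn hκ.le
      have hkge : n - m ≤ k := by
        by_contra hcon
        push_neg at hcon
        have h1 : k + 1 ≤ n - m := by omega
        have h2 : R (n - m) ≤ R (k + 1) := hRanti h1
        have h3 : κ * R (n - m) ≤ κ * R (k + 1) := mul_le_mul_of_nonneg_left h2 hκ.le
        linarith
      have hy2N : (N:ℝ) ^ (n - m) ≤ y2 := by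
        calc (N:ℝ) ^ (n - m) ≤ (N:ℝ) ^ k := pow_le_pow_right₀ hNR hkge
          _ ≤ y2 := hy2l
      have h1 : y1 < (N:ℝ) ^ (n + 1) := hy1r
      have h2 : (N:ℝ) ^ (n + 1) ≤ (N:ℝ) ^ ((2:ℝ) + L) * (N:ℝ) ^ (n - m) := by
        have e1 : ((N:ℝ)) ^ (n+1) = (N:ℝ) ^ (((n+1:ℕ):ℝ)) := by
          rw [Real.rpow_natCast]
        have e2 : ((N:ℝ)) ^ (n - m) = (N:ℝ) ^ (((n - m : ℕ) : ℝ)) := by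
          rw [Real.rpow_natCast]
        rw [e1, e2, ← Real.rpow_add hNpos]
        apply Real.rpow_le_rpow_of_exponent_le hNR
        have e3 : ((n - m : ℕ) : ℝ) = (n:ℝ) - (m:ℝ) := Nat.cast_sub hnm
        rw [e3]
        push_cast
        linarith
      have h3 : (N:ℝ) ^ ((2:ℝ) + L) * (N:ℝ) ^ (n - m) ≤ (N:ℝ) ^ ((2:ℝ) + L) * y2 := by
        apply mul_le_mul_of_nonneg_left hy2N
        positivity
      linarith
  -- conclude
  rw [hhx, hh2x]
  have e : (N:ℝ) ^ (2 - Real.log 2 / Real.log θ) * (1 / y1)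
      = (N:ℝ) ^ (2 - Real.log 2 / Real.log θ) / y1 := by ring
  rw [e, div_le_div_iff₀ hy2pos hy1pos, one_mul]
  exact hmain
end

section
/- Let (s_n) be a positive sequence and 0 < A, and suppose 0 < liminf_n N^n s_n^A and limsup along some subsequence n_j satisfies N^{n_j} s_{n_j}^A → I ∈ (0,∞). For 0 < a < A, define π : ℕ → ℕ injective with π(i) ≈ (A/a)i (specifically −1 ≤ π(i) − (A/a)i ≤ A/a + 1). Then the subsequence t_i = s_{π(i)} satisfies 0 < liminf_i N^i t_i^a and liminf_i N^i t_i^a < ∞ along i with π(i) = n_j. -/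
open scoped ENNReal

open Filter

/-- Key identity: `N^i * x^a = (N^n * x^A)^(a/A) * N^(i - (a/A)*n)`. -/
lemma key_id (N : ℕ) (hN : 0 < N) (A a : ℝ) (ha : 0 < a) (haA : a < A)
    (x : ℝ) (hx : 0 < x) (n i : ℕ) :
    (N : ℝ) ^ i * x ^ a
      = ((N : ℝ) ^ n * x ^ A) ^ (a / A) * (N : ℝ) ^ ((i : ℝ) - (a / A) * n) := by
  have hA : (0:ℝ) < A := ha.trans haA
  have hN0 : (0:ℝ) < (N:ℝ) := by exact_mod_cast hN
  rw [Real.mul_rpow (by positivity) (by positivity)]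
  rw [← Real.rpow_natCast (N:ℝ) n, ← Real.rpow_natCast (N:ℝ) i,
    ← Real.rpow_mul hN0.le, ← Real.rpow_mul hx.le]
  have hAa : A * (a/A) = a := by field_simp
  rw [hAa, mul_comm ((N:ℝ)^((n:ℝ)*(a/A))) (x ^ a), mul_assoc, ← Real.rpow_add hN0,
    show (n:ℝ)*(a/A) + ((i:ℝ) - a/A*(n:ℝ)) = (i:ℝ) by ring, mul_comm]

/-- the combinatorial core of Theorem 7(1).  Suppose
`0 < liminf_n N^n sₙ^A` and `N^{n_j} s_{n_j}^A → I ∈ (0,∞)` along a subsequence `(n_j)`.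
For `0 < a < A`, let `π : ℕ → ℕ` be injective with `−1 ≤ π(i) − (A/a)i ≤ A/a + 1`.  Then
the subsequence `tᵢ = s_{π(i)}` satisfies `0 < liminf_i N^i tᵢ^a`, and the liminf of
`N^i tᵢ^a` along indices `i` with `π(i) = n_j` is finite. -/
theorem stmt_18 (N : ℕ) (hN : 2 ≤ N)
    (s : ℕ → ℝ) (hs : ∀ n, 0 < s n)
    (A a : ℝ) (ha : 0 < a) (haA : a < A)
    (hliminf : 0 < Filter.atTop.liminf
      (fun n : ℕ => ENNReal.ofReal ((N : ℝ) ^ n * s n ^ A)))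
    (nseq : ℕ → ℕ) (hnseq : StrictMono nseq)
    (I : ℝ) (hI : 0 < I)
    (hItend : Filter.Tendsto (fun j => (N : ℝ) ^ (nseq j) * s (nseq j) ^ A)
      Filter.atTop (nhds I))
    (π : ℕ → ℕ) (hπinj : Function.Injective π)
    (hπ : ∀ i : ℕ, -1 ≤ (π i : ℝ) - (A / a) * i ∧ (π i : ℝ) - (A / a) * i ≤ A / a + 1) :
    (0 < Filter.atTop.liminf
        (fun i : ℕ => ENNReal.ofReal ((N : ℝ) ^ i * s (π i) ^ a))) ∧
      ∀ q : ℕ → ℕ, StrictMono q → (∀ j, π (q j) = nseq j) →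
        Filter.atTop.liminf
            (fun j : ℕ => ENNReal.ofReal ((N : ℝ) ^ (q j) * s (π (q j)) ^ a)) < ⊤ := by
  have hA : (0:ℝ) < A := ha.trans haA
  have hN0 : (0:ℝ) < (N:ℝ) := by positivity
  have hN1 : (1:ℝ) ≤ (N:ℝ) := by exact_mod_cast Nat.one_le_of_lt hN
  have hr0 : 0 < a / A := by positivity
  have hr1 : a / A ≤ 1 := by
    rw [div_le_one hA]; exact haA.le
  constructor
  · -- lower bound
    obtain ⟨ε, hεnn, hεofReal, hεlt⟩ := (ENNReal.lt_iff_exists_real_btwn).mp hliminf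
    have hε0 : 0 < ε := by
      by_contra h
      push_neg at h
      rw [ENNReal.ofReal_eq_zero.mpr h] at hεofReal
      exact lt_irrefl _ hεofReal
    have hev : ∀ᶠ n in Filter.atTop,
        ENNReal.ofReal ε < ENNReal.ofReal ((N : ℝ) ^ n * s n ^ A) :=
      Filter.eventually_lt_of_lt_liminf hεlt
    set C : ℝ := ε ^ (a/A) * (N:ℝ) ^ (-2 : ℝ) with hC
    have hC0 : 0 < C := by positivity
    refine lt_of_lt_of_le (b := ENNReal.ofReal C) (by simpa using hC0) ?_
    refine Filter.le_liminf_of_le (by isBoundedDefault) ?_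
    -- eventually C ≤ N^i * s(π i)^a
    have hten : Filter.Tendsto π Filter.atTop Filter.atTop :=
      hπinj.nat_tendsto_atTop
    have := hten.eventually hev
    filter_upwards [this] with i hi
    apply ENNReal.ofReal_le_ofReal
    have hεle : ε ≤ (N : ℝ) ^ (π i) * s (π i) ^ A :=
      le_of_lt ((ENNReal.ofReal_lt_ofReal_iff_of_nonneg hε0.le).mp hi)
    rw [key_id N (by omega) A a ha haA (s (π i)) (hs (π i)) (π i) i]
    have h1 : ε ^ (a/A) ≤ ((N : ℝ) ^ (π i) * s (π i) ^ A) ^ (a/A) :=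
      Real.rpow_le_rpow hε0.le hεle hr0.le
    have hexp : (-2 : ℝ) ≤ (i : ℝ) - (a/A) * (π i) := by
      have h2 := (hπ i).2
      have : (a/A) * (π i) ≤ (a/A) * ((A/a) * i + (A/a + 1)) := by
        apply mul_le_mul_of_nonneg_left _ hr0.le
        linarith
      have h3 : (a/A) * ((A/a) * i + (A/a + 1)) = i + 1 + a/A := by
        field_simp; ring
      rw [h3] at this
      nlinarith
    have h2 : (N:ℝ) ^ (-2:ℝ) ≤ (N:ℝ) ^ ((i : ℝ) - (a/A) * (π i)) :=
      Real.rpow_le_rpow_of_exponent_le hN1 hexp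
    exact mul_le_mul h1 h2 (by positivity)
      (Real.rpow_nonneg (mul_nonneg (by positivity) (Real.rpow_nonneg (hs _).le _)) _)
  · -- upper bound along q
    intro q hq hqπ
    have hev : ∀ᶠ j in Filter.atTop,
        (N : ℝ) ^ (nseq j) * s (nseq j) ^ A ≤ I + 1 :=
      hItend.eventually (eventually_le_nhds (by linarith))
    set C' : ℝ := (I+1) ^ (a/A) * (N:ℝ) ^ (1 : ℝ) with hC'
    refine lt_of_le_of_lt (b := ENNReal.ofReal C') ?_ ENNReal.ofReal_lt_top
    refine Filter.liminf_le_of_frequently_le ?_ (by isBoundedDefault)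
    apply Filter.Eventually.frequently
    filter_upwards [hev] with j hj
    apply ENNReal.ofReal_le_ofReal
    rw [hqπ j, key_id N (by omega) A a ha haA (s (nseq j)) (hs (nseq j)) (nseq j) (q j)]
    have h1 : ((N : ℝ) ^ (nseq j) * s (nseq j) ^ A) ^ (a/A) ≤ (I+1) ^ (a/A) :=
      Real.rpow_le_rpow (mul_nonneg (by positivity) (Real.rpow_nonneg (hs _).le _)) hj hr0.le
    have hexp : (q j : ℝ) - (a/A) * (nseq j) ≤ 1 := by
      have h2 := (hπ (q j)).1
      rw [hqπ j] at h2
      have : (a/A) * ((A/a) * (q j) + (-1)) ≤ (a/A) * (nseq j) := by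
        apply mul_le_mul_of_nonneg_left _ hr0.le
        linarith
      have h3 : (a/A) * ((A/a) * (q j) + (-1)) = q j - a/A := by
        field_simp; ring
      rw [h3] at this
      nlinarith
    have h2 : (N:ℝ) ^ ((q j : ℝ) - (a/A) * (nseq j)) ≤ (N:ℝ) ^ (1:ℝ) :=
      Real.rpow_le_rpow_of_exponent_le hN1 hexp
    exact mul_le_mul h1 h2 (by positivity) (by positivity)
end

section
/- Let C be the middle-thirds Cantor set realized as the sum set with s_n = 2·3^{-n} and 𝒟^n = {0,1}, and d = ln 2 / ln 3. If (t_n) is obtained from (s_n) by removing exactly K terms, then ℋ^d(C_{t,𝒟}) = 2^{-K}·ℋ^d(C). In particular no subsequence (t_n) of (s_n) satisfies ℋ^d(C_{t,𝒟}) = ℋ^d(C)/3. -/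
/-!
Write `subsum c A = ∑_{n ∈ A} c n`, so that `C = range (subsum c)` for `cₙ = 2·3⁻⁽ⁿ⁺¹⁾`, and
removing the terms indexed by a finite set `S` leaves `C_t = subsum c '' 𝒫 Sᶜ`. Every `cₙ`
exceeds the sum of the later terms, so `subsum c` is injective and `C` is the disjoint union of
the `2^#S` translates of the compact set `C_t` by the sums `∑_{i ∈ s} cᵢ`, `s ⊆ S`; translation
invariance of `ℋ^d` gives `ℋ^d(C) = 2^#S · ℋ^d(C_t)`.

For the second claim one needs `0 < ℋ^d(C) < ∞`. The `2ⁿ` intervals of length `3⁻ⁿ` at level `n`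
cover `C`, and `2ⁿ (3⁻ⁿ)^d = 1`, so `ℋ^d(C) ≤ 1`. Replacing `cₙ` by `2⁻⁽ⁿ⁺¹⁾` gives a
`d`-Hölder map from `C` onto a set containing `[0, 1]` (binary expansions), so `1 ≤ 2 ℋ^d(C)`.
Now `ℋ^d(C_t) = ℋ^d(C)/3` would force `2^K = 3` if `K` terms are removed, and if infinitely
many are removed then `C_t` lies in a set of measure `ℋ^d(C)/4`.
-/

open MeasureTheory
open scoped ENNReal

open Set Filter Topology Function
open scoped NNReal Pointwise

namespace CantorSubsum

noncomputable def subsum (c : ℕ → ℝ) (A : Set ℕ) : ℝ := ∑' n, A.indicator c n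

section General

variable {c : ℕ → ℝ} {A B : Set ℕ} {n : ℕ}

lemma subsum_union (hc : Summable c) (h : Disjoint A B) :
    subsum c (A ∪ B) = subsum c A + subsum c B := by
  simp only [subsum, indicator_union_of_disjoint h]
  exact (hc.indicator A).tsum_add (hc.indicator B)

lemma subsum_coe_finset (s : Finset ℕ) : subsum c s = ∑ i ∈ s, c i := by
  rw [subsum, tsum_eq_sum (s := s) fun i hi => indicator_of_notMem (by simpa using hi) c]
  exact Finset.sum_congr rfl fun i hi => indicator_of_mem (by simpa using hi) c

lemma subsum_nonneg (h0 : 0 ≤ c) (A : Set ℕ) : 0 ≤ subsum c A :=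
  tsum_nonneg <| indicator_nonneg fun i _ => h0 i

lemma subsum_mono (hc : Summable c) (h0 : 0 ≤ c) (h : A ⊆ B) : subsum c A ≤ subsum c B :=
  (hc.indicator A).tsum_le_tsum (indicator_le_indicator_of_subset h h0) (hc.indicator B)

lemma le_subsum_of_mem (hc : Summable c) (h0 : 0 ≤ c) (hn : n ∈ A) : c n ≤ subsum c A := by
  simpa [subsum, indicator_of_mem hn] using
    (hc.indicator A).le_tsum n fun k _ => indicator_nonneg (fun i _ => h0 i) k

lemma subsum_Ici (hc : Summable c) (n : ℕ) : subsum c (Ici n) = ∑' k, c (k + n) := by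
  rw [subsum, ← (hc.indicator _).sum_add_tsum_nat_add n, Finset.sum_eq_zero, zero_add]
  · exact tsum_congr fun k => indicator_of_mem (by simp) c
  · exact fun i hi => indicator_of_notMem (by simpa using hi) c

lemma subsum_le_tsum_add (hc : Summable c) (h0 : 0 ≤ c) (hA : ∀ k ∈ A, n ≤ k) :
    subsum c A ≤ ∑' k, c (k + n) :=
  subsum_Ici hc n ▸ subsum_mono hc h0 hA

lemma subsum_eq_add_inter_Ici (hc : Summable c) (A : Set ℕ) (n : ℕ) :
    subsum c A = subsum c (A ∩ Iio n) + subsum c (A ∩ Ici n) := by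
  rw [← subsum_union hc ((Iio_disjoint_Ici le_rfl).mono inter_subset_right inter_subset_right),
    ← inter_union_distrib_left, Iio_union_Ici, inter_univ]

lemma exists_inter_Iio_eq_of_ne (h : A ≠ B) : ∃ n, A ∩ Iio n = B ∩ Iio n ∧ n ∈ symmDiff A B := by
  classical
  have hne : (symmDiff A B).Nonempty := nonempty_iff_ne_empty.2 (symmDiff_eq_bot.not.2 h)
  refine ⟨Nat.find hne, ?_, Nat.find_spec hne⟩
  ext k
  simp only [mem_inter_iff, mem_Iio, and_congr_left_iff]
  intro hk
  have := Nat.find_min hne hk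
  simp only [mem_symmDiff] at this
  tauto

lemma abs_subsum_sub_le_tsum_add (hc : Summable c) (h0 : 0 ≤ c)
    (hAB : A ∩ Iio n = B ∩ Iio n) :
    |subsum c A - subsum c B| ≤ ∑' k, c (k + n) := by
  rw [subsum_eq_add_inter_Ici hc A n, subsum_eq_add_inter_Ici hc B n, hAB,
    add_sub_add_left_eq_sub]
  exact abs_sub_le_of_nonneg_of_le (subsum_nonneg h0 _)
    (subsum_le_tsum_add hc h0 fun k hk => hk.2) (subsum_nonneg h0 _)
    (subsum_le_tsum_add hc h0 fun k hk => hk.2)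

lemma sub_tsum_add_le_subsum_sub (hc : Summable c) (h0 : 0 ≤ c)
    (hAB : A ∩ Iio n = B ∩ Iio n) (hA : n ∈ A) (hB : n ∉ B) :
    c n - ∑' k, c (k + (n + 1)) ≤ subsum c A - subsum c B := by
  rw [subsum_eq_add_inter_Ici hc A n, subsum_eq_add_inter_Ici hc B n, hAB]
  have hA' : c n ≤ subsum c (A ∩ Ici n) := le_subsum_of_mem hc h0 ⟨hA, mem_Ici.2 le_rfl⟩
  have hB' : subsum c (B ∩ Ici n) ≤ ∑' k, c (k + (n + 1)) :=
    subsum_le_tsum_add hc h0 fun k hk => (mem_Ici.1 hk.2).lt_of_ne (by rintro rfl; exact hB hk.1)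
  linarith

lemma exists_sub_tsum_add_le_abs_subsum_sub (hc : Summable c) (h0 : 0 ≤ c) (h : A ≠ B) :
    ∃ n, A ∩ Iio n = B ∩ Iio n ∧ c n - ∑' k, c (k + (n + 1)) ≤ |subsum c A - subsum c B| := by
  obtain ⟨n, hAB, hn | hn⟩ := exists_inter_Iio_eq_of_ne h
  · exact ⟨n, hAB, (sub_tsum_add_le_subsum_sub hc h0 hAB hn.1 hn.2).trans (le_abs_self _)⟩
  · refine ⟨n, hAB, (sub_tsum_add_le_subsum_sub hc h0 hAB.symm hn.1 hn.2).trans ?_⟩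
    exact abs_sub_comm (subsum c A) _ ▸ le_abs_self _

lemma subsum_injective (hc : Summable c) (h0 : 0 ≤ c)
    (hsep : ∀ n, ∑' k, c (k + (n + 1)) < c n) : Injective (subsum c) := by
  intro A B hAB
  by_contra h
  obtain ⟨n, -, hn⟩ := exists_sub_tsum_add_le_abs_subsum_sub hc h0 h
  rw [hAB, sub_self, abs_zero] at hn
  linarith [hsep n]

lemma isCompact_range_subsum (hc : Summable c) : IsCompact (range (subsum c)) := by
  classical
  have hsurj : Surjective fun ε : ℕ → Bool => {n | ε n} :=
    fun A => ⟨fun n => decide (n ∈ A), by simp⟩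
  rw [← hsurj.range_comp]
  refine isCompact_range (continuous_tsum (fun n => ?_) hc.abs fun n ε => ?_)
  · exact (continuous_of_discreteTopology (f := fun b : Bool => if b then c n else 0)).comp
      (continuous_apply n) |>.congr fun ε => by simp [indicator]
  · exact norm_indicator_le_norm_self c n

lemma isCompact_subsum_image_powerset (hc : Summable c) (T : Set ℕ) :
    IsCompact (subsum c '' 𝒫 T) := by
  have h : subsum c '' 𝒫 T = range (subsum (T.indicator c)) := by
    ext x
    simp only [mem_image, mem_range, mem_powerset_iff, subsum, indicator_indicator]
    constructor
    · rintro ⟨A, hA, rfl⟩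
      exact ⟨A, by rw [inter_eq_left.2 hA]⟩
    · rintro ⟨A, rfl⟩
      exact ⟨A ∩ T, inter_subset_right, rfl⟩
  exact h ▸ isCompact_range_subsum (hc.indicator T)

lemma subsum_image_inter_eq (hc : Summable c) {S s : Finset ℕ} (hs : s ⊆ S) :
    subsum c '' {B | B ∩ S = s} = (∑ i ∈ s, c i) +ᵥ subsum c '' 𝒫 (↑S)ᶜ := by
  have hsplit : ∀ A ⊆ (↑S)ᶜ, subsum c (↑s ∪ A) = (∑ i ∈ s, c i) + subsum c A := fun A hA => by
    rw [subsum_union hc ((disjoint_compl_right.mono_left (Finset.coe_subset.2 hs)).mono_right hA),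
      subsum_coe_finset]
  rw [← image_vadd, image_image]
  ext x
  constructor
  · rintro ⟨B, hB, rfl⟩
    refine ⟨B \ S, fun k hk => hk.2, ?_⟩
    change (∑ i ∈ s, c i) + _ = _
    rw [← hsplit _ fun k hk => hk.2, ← hB, inter_union_sdiff]
  · rintro ⟨A, hA, rfl⟩
    refine ⟨↑s ∪ A, ?_, hsplit A hA⟩
    change _ = _
    rw [union_inter_distrib_right, inter_eq_left.2 (Finset.coe_subset.2 hs),
      (subset_compl_iff_disjoint_right.1 hA).inter_eq, union_empty]

lemma hausdorffMeasure_image_powerset (hc : Summable c) (hinj : Injective (subsum c))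
    {T : Set ℕ} (hT : Tᶜ.Finite) (d : ℝ) :
    μH[d] (subsum c '' 𝒫 T) = 2⁻¹ ^ Tᶜ.ncard * μH[d] (range (subsum c)) := by
  classical
  set S := hT.toFinset
  have hST : T = (↑S)ᶜ := by simp [S]
  have hcover : range (subsum c) = ⋃ s ∈ S.powerset, subsum c '' {B | B ∩ S = s} := by
    refine (iUnion₂_subset fun s _ => image_subset_range _ _).antisymm' ?_
    rintro _ ⟨B, rfl⟩
    exact mem_biUnion (Finset.mem_powerset.2 (Finset.filter_subset (· ∈ B) S))
      ⟨B, by ext; simp [and_comm], rfl⟩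
  have hdisj : (↑S.powerset : Set (Finset ℕ)).PairwiseDisjoint
      fun s => subsum c '' {B | B ∩ S = s} := fun s _ s' _ hne =>
    (disjoint_image_iff hinj).2 <| disjoint_left.2 fun B hB hB' =>
      hne (Finset.coe_injective (hB.symm.trans hB'))
  have hpiece : ∀ s ∈ S.powerset, subsum c '' {B | B ∩ S = s}
      = (∑ i ∈ s, c i) +ᵥ subsum c '' 𝒫 (↑S)ᶜ := fun s hs =>
    subsum_image_inter_eq hc (Finset.mem_powerset.1 hs)
  have hmeas : ∀ s ∈ S.powerset, MeasurableSet (subsum c '' {B | B ∩ S = s}) := fun s hs =>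
    hpiece s hs ▸ (isCompact_subsum_image_powerset hc _).isClosed.measurableSet.const_vadd _
  rw [hcover, measure_biUnion_finset hdisj hmeas, Finset.sum_congr rfl fun s hs => by
    rw [hpiece s hs, measure_vadd], Finset.sum_const, Finset.card_powerset, nsmul_eq_mul, ← hST,
    ncard_eq_toFinset_card _ hT, Nat.cast_pow, Nat.cast_two, ← mul_assoc, ← mul_pow,
    ENNReal.inv_mul_cancel two_ne_zero ENNReal.ofNat_ne_top, one_pow, one_mul]

lemma hausdorffMeasure_range_subsum_le_liminf (hc : Summable c) (h0 : 0 ≤ c) (d : ℝ) :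
    μH[d] (range (subsum c)) ≤
      liminf (fun n : ℕ => 2 ^ n * ENNReal.ofReal (∑' k, c (k + n)) ^ d) atTop := by
  classical
  let t : (n : ℕ) → (Finset.range n).powerset → Set ℝ := fun n s =>
    Icc (∑ i ∈ s.1, c i) (∑ i ∈ s.1, c i + ∑' k, c (k + n))
  have hdiam : ∀ n s, Metric.ediam (t n s) = ENNReal.ofReal (∑' k, c (k + n)) := fun n s => by
    simp [t, Real.ediam_Icc]
  have hcover : ∀ n, range (subsum c) ⊆ ⋃ s, t n s := by
    rintro n _ ⟨A, rfl⟩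
    set s := (Finset.range n).filter (· ∈ A)
    have hs : (↑s : Set ℕ) = A ∩ Iio n := by ext; simp [s, and_comm]
    refine mem_iUnion.2 ⟨⟨s, Finset.mem_powerset.2 (Finset.filter_subset _ _)⟩, ?_⟩
    rw [subsum_eq_add_inter_Ici hc A n, ← hs, subsum_coe_finset]
    exact ⟨le_add_of_nonneg_right (subsum_nonneg h0 _),
      add_le_add_right (subsum_le_tsum_add hc h0 fun k (hk : k ∈ A ∩ Ici n) => hk.2) _⟩
  have hr : Tendsto (fun n => ENNReal.ofReal (∑' k, c (k + n))) atTop (𝓝 0) :=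
    ENNReal.ofReal_zero ▸ (ENNReal.continuous_ofReal.tendsto 0).comp (tendsto_sum_nat_add c)
  simpa [hdiam, tsum_fintype, Finset.card_univ] using
    Measure.hausdorffMeasure_le_liminf_tsum d (range (subsum c)) _ hr t
      (.of_forall fun n s => (hdiam n s).le) (.of_forall hcover)

lemma abs_subsum_sub_le_of_tsum_add_le {e : ℕ → ℝ} (hc : Summable c) (h0 : 0 ≤ c)
    (he : Summable e) (he0 : 0 ≤ e) {C r : ℝ≥0} (hsep : ∀ n, ∑' k, c (k + (n + 1)) ≤ c n)
    (h : ∀ n, ∑' k, e (k + n) ≤ C * (c n - ∑' k, c (k + (n + 1))) ^ (r : ℝ)) (A B : Set ℕ) :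
    |subsum e A - subsum e B| ≤ C * |subsum c A - subsum c B| ^ (r : ℝ) := by
  rcases eq_or_ne A B with rfl | hAB
  · simp only [sub_self, abs_zero]
    positivity
  obtain ⟨n, hn, hgap⟩ := exists_sub_tsum_add_le_abs_subsum_sub hc h0 hAB
  calc |subsum e A - subsum e B| ≤ ∑' k, e (k + n) := abs_subsum_sub_le_tsum_add he he0 hn
    _ ≤ C * (c n - ∑' k, c (k + (n + 1))) ^ (r : ℝ) := h n
    _ ≤ C * |subsum c A - subsum c B| ^ (r : ℝ) := by
      have := hsep n
      gcongr

lemma hausdorffMeasure_range_subsum_le {e : ℕ → ℝ} (hc : Summable c) (h0 : 0 ≤ c)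
    (he : Summable e) (he0 : 0 ≤ e) {C r : ℝ≥0} (hr : 0 < r)
    (hsep : ∀ n, ∑' k, c (k + (n + 1)) ≤ c n)
    (h : ∀ n, ∑' k, e (k + n) ≤ C * (c n - ∑' k, c (k + (n + 1))) ^ (r : ℝ))
    {d : ℝ} (hd : 0 ≤ d) :
    μH[d] (range (subsum e)) ≤ (C : ℝ≥0∞) ^ d * μH[r * d] (range (subsum c)) := by
  have habs := abs_subsum_sub_le_of_tsum_add_le hc h0 he he0 hsep h
  set f := subsum e ∘ invFun (subsum c)
  -- No injectivity is needed: the bound makes `subsum e` constant on the fibres of `subsum c`.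
  have hf : ∀ A, f (subsum c A) = subsum e A := fun A => by
    have hinv : subsum c (invFun (subsum c) (subsum c A)) = subsum c A := invFun_eq ⟨A, rfl⟩
    have := habs (invFun (subsum c) (subsum c A)) A
    rwa [hinv, sub_self, abs_zero, Real.zero_rpow (NNReal.coe_ne_zero.2 hr.ne'), mul_zero,
      abs_nonpos_iff, sub_eq_zero] at this
  have hholder : HolderOnWith C r f (range (subsum c)) := by
    rintro _ ⟨A, rfl⟩ _ ⟨B, rfl⟩
    rw [hf, hf, edist_dist, edist_dist, Real.dist_eq, Real.dist_eq,
      ENNReal.ofReal_rpow_of_nonneg (abs_nonneg _) r.coe_nonneg, ← ENNReal.ofReal_coe_nnreal,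
      ← ENNReal.ofReal_mul C.coe_nonneg]
    exact ENNReal.ofReal_le_ofReal (habs A B)
  have himage : f '' range (subsum c) = range (subsum e) := by
    rw [← range_comp]
    exact congrArg range (funext hf)
  simpa [himage] using hholder.hausdorffMeasure_image_le hr hd

lemma tsum_ite_comp_eq_subsum_image {g : ℕ → ℕ} (hg : Injective g) (ε : ℕ → Bool) :
    ∑' n, (if ε n then c (g n) else 0) = subsum c (g '' {n | ε n}) := by
  rw [subsum, ← hg.tsum_eq (support_indicator_subset.trans (image_subset_range g _))]
  refine tsum_congr fun n => ?_
  rw [indicator_image hg]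
  simp [indicator]

lemma range_tsum_ite_comp {g : ℕ → ℕ} (hg : Injective g) :
    (range fun ε : ℕ → Bool => ∑' n, if ε n then c (g n) else 0) = subsum c '' 𝒫 (range g) := by
  classical
  ext x
  simp only [tsum_ite_comp_eq_subsum_image hg, mem_range, mem_image, mem_powerset_iff]
  constructor
  · rintro ⟨ε, rfl⟩
    exact ⟨_, image_subset_range g _, rfl⟩
  · rintro ⟨A, hA, rfl⟩
    refine ⟨fun n => decide (g n ∈ A), ?_⟩
    simp only [decide_eq_true_eq]
    exact congrArg _ (image_preimage_eq_of_subset hA)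

end General

noncomputable def cantorSeq (n : ℕ) : ℝ := 2 / 3 ^ (n + 1)

noncomputable def dyadicSeq (n : ℕ) : ℝ := (2 ^ (n + 1))⁻¹

lemma hasSum_sub_one_div_pow_add {b : ℝ} (hb : 1 < b) (n : ℕ) :
    HasSum (fun k => (b - 1) / b ^ (k + n + 1)) (b ^ n)⁻¹ := by
  have hb0 : b ≠ 0 := by positivity
  have hb1 : b - 1 ≠ 0 := sub_ne_zero.2 hb.ne'
  have h := (hasSum_geometric_of_lt_one (by positivity) (inv_lt_one_of_one_lt₀ hb)).mul_left
    ((b - 1) / b ^ (n + 1))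
  rw [show (b - 1) / b ^ (n + 1) * (1 - b⁻¹)⁻¹ = (b ^ n)⁻¹ by field_simp; ring] at h
  have hterm : ∀ k, (b - 1) / b ^ (k + n + 1) = (b - 1) / b ^ (n + 1) * b⁻¹ ^ k := fun k => by
    rw [inv_pow, add_assoc, pow_add]
    field_simp
  simpa only [hterm] using h

lemma hasSum_cantorSeq_add (n : ℕ) : HasSum (fun k => cantorSeq (k + n)) (3 ^ n)⁻¹ := by
  convert hasSum_sub_one_div_pow_add (by norm_num : (1 : ℝ) < 3) n using 1
  funext k
  norm_num [cantorSeq, add_assoc]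

lemma hasSum_dyadicSeq_add (n : ℕ) : HasSum (fun k => dyadicSeq (k + n)) (2 ^ n)⁻¹ := by
  convert hasSum_sub_one_div_pow_add (by norm_num : (1 : ℝ) < 2) n using 1
  funext k
  norm_num [dyadicSeq, add_assoc]

lemma tsum_cantorSeq_add (n : ℕ) : ∑' k, cantorSeq (k + n) = (3 ^ n)⁻¹ :=
  (hasSum_cantorSeq_add n).tsum_eq

lemma tsum_dyadicSeq_add (n : ℕ) : ∑' k, dyadicSeq (k + n) = (2 ^ n)⁻¹ :=
  (hasSum_dyadicSeq_add n).tsum_eq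

lemma summable_cantorSeq : Summable cantorSeq := by
  simpa using (hasSum_cantorSeq_add 0).summable

lemma summable_dyadicSeq : Summable dyadicSeq := by
  simpa using (hasSum_dyadicSeq_add 0).summable

lemma cantorSeq_nonneg : 0 ≤ cantorSeq := fun n => by unfold cantorSeq; positivity

lemma dyadicSeq_nonneg : 0 ≤ dyadicSeq := fun n => by unfold dyadicSeq; positivity

lemma cantorSeq_sub_tsum_add (n : ℕ) :
    cantorSeq n - ∑' k, cantorSeq (k + (n + 1)) = (3 ^ (n + 1))⁻¹ := by
  rw [tsum_cantorSeq_add, cantorSeq]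
  ring

lemma inv_three_pow_rpow (n : ℕ) :
    ((3 : ℝ) ^ n)⁻¹ ^ (Real.log 2 / Real.log 3) = ((2 : ℝ) ^ n)⁻¹ := by
  rw [Real.inv_rpow (by positivity), ← Real.rpow_natCast, ← Real.rpow_mul (by norm_num),
    mul_comm, Real.rpow_mul (by norm_num), Real.log_div_log,
    Real.rpow_logb (by norm_num) (by norm_num) (by norm_num), Real.rpow_natCast]

lemma tsum_cantorSeq_add_succ_lt (n : ℕ) : ∑' k, cantorSeq (k + (n + 1)) < cantorSeq n := by
  have := cantorSeq_sub_tsum_add n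
  have : (0 : ℝ) < (3 ^ (n + 1))⁻¹ := by positivity
  linarith

lemma subsum_cantorSeq_injective : Injective (subsum cantorSeq) :=
  subsum_injective summable_cantorSeq cantorSeq_nonneg tsum_cantorSeq_add_succ_lt

lemma hausdorffMeasure_range_subsum_cantorSeq_le_one :
    μH[Real.log 2 / Real.log 3] (range (subsum cantorSeq)) ≤ 1 := by
  refine (hausdorffMeasure_range_subsum_le_liminf summable_cantorSeq cantorSeq_nonneg _).trans_eq ?_
  have h2 : ∀ n : ℕ, (2 : ℝ≥0∞) ^ n * ENNReal.ofReal (3 ^ n)⁻¹ ^ (Real.log 2 / Real.log 3) = 1 :=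
    fun n => by
      rw [ENNReal.ofReal_rpow_of_nonneg (by positivity) (by positivity), inv_three_pow_rpow,
        ENNReal.ofReal_inv_of_pos (by positivity), ENNReal.ofReal_pow zero_le_two,
        ENNReal.ofReal_ofNat, ENNReal.mul_inv_cancel (by simp) (by simp)]
  simp_rw [tsum_cantorSeq_add, h2, liminf_const]

lemma Icc_subset_range_subsum_dyadicSeq : Icc 0 1 ⊆ range (subsum dyadicSeq) := by
  intro y hy
  obtain ⟨a, -, rfl⟩ := Real.ofDigits_SurjOn one_lt_two hy
  refine ⟨{n | a n = 1}, tsum_congr fun n => ?_⟩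
  match h : a n with
  | 0 => simp [Real.ofDigitsTerm, h]
  | 1 => simp [Real.ofDigitsTerm, dyadicSeq, h]

lemma hausdorffMeasure_range_subsum_cantorSeq_ne_zero :
    μH[Real.log 2 / Real.log 3] (range (subsum cantorSeq)) ≠ 0 := by
  have hd : 0 < Real.log 2 / Real.log 3 := by positivity
  have h := hausdorffMeasure_range_subsum_le summable_cantorSeq cantorSeq_nonneg
    summable_dyadicSeq dyadicSeq_nonneg (C := 2) (Real.toNNReal_pos.2 hd)
    (fun n => (tsum_cantorSeq_add_succ_lt n).le)
    (fun n => le_of_eq <| by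
      rw [tsum_dyadicSeq_add, cantorSeq_sub_tsum_add, Real.coe_toNNReal _ hd.le,
        inv_three_pow_rpow, pow_succ, NNReal.coe_ofNat]
      field_simp) zero_le_one
  have h1 : (1 : ℝ≥0∞) ≤ μH[1] (range (subsum dyadicSeq)) :=
    calc (1 : ℝ≥0∞) = μH[1] (Icc (0 : ℝ) 1) := by simp [hausdorffMeasure_real]
      _ ≤ _ := measure_mono Icc_subset_range_subsum_dyadicSeq
  rw [Real.coe_toNNReal _ hd.le, mul_one, ENNReal.rpow_one] at h
  intro h0
  rw [h0, mul_zero] at h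
  exact one_ne_zero (le_antisymm (h1.trans h) bot_le)

lemma range_tsum_ite_cantor {g : ℕ → ℕ} (hg : Injective g) :
    (range fun ε : ℕ → Bool => ∑' n : ℕ, if ε n then (2 / 3 ^ (g n + 1) : ℝ) else 0)
      = subsum cantorSeq '' 𝒫 (range g) :=
  range_tsum_ite_comp (c := cantorSeq) hg

lemma range_tsum_ite_cantor_id :
    (range fun ε : ℕ → Bool => ∑' n : ℕ, if ε n then (2 / 3 ^ (n + 1) : ℝ) else 0)
      = range (subsum cantorSeq) :=
  (range_tsum_ite_cantor injective_id).trans (by rw [range_id, powerset_univ, image_univ])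

lemma hausdorffMeasure_image_powerset_cantorSeq_ne_div_three (T : Set ℕ) :
    μH[Real.log 2 / Real.log 3] (subsum cantorSeq '' 𝒫 T)
      ≠ μH[Real.log 2 / Real.log 3] (range (subsum cantorSeq)) / 3 := by
  have h0 := hausdorffMeasure_range_subsum_cantorSeq_ne_zero
  have htop := ne_top_of_le_ne_top ENNReal.one_ne_top hausdorffMeasure_range_subsum_cantorSeq_le_one
  rw [ENNReal.div_eq_inv_mul]
  by_cases hT : Tᶜ.Finite
  · rw [hausdorffMeasure_image_powerset summable_cantorSeq subsum_cantorSeq_injective hT, Ne,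
      ENNReal.mul_left_inj h0 htop, ← ENNReal.inv_pow, inv_inj]
    intro h
    have h2 : 2 ^ Tᶜ.ncard = 3 := by exact_mod_cast h
    have hK : Tᶜ.ncard ≠ 0 := fun hK => by simp [hK] at h2
    exact absurd (h2 ▸ Nat.even_pow.2 ⟨even_two, hK⟩) (by decide)
  · obtain ⟨S, hS, hcard⟩ := Set.Infinite.exists_subset_card_eq hT 2
    have hle := measure_mono (μ := μH[Real.log 2 / Real.log 3])
      (image_mono (f := subsum cantorSeq) (powerset_mono.2 (subset_compl_comm.1 hS)))
    rw [hausdorffMeasure_image_powerset (T := (↑S)ᶜ) summable_cantorSeq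
      subsum_cantorSeq_injective (by simp), compl_compl, ncard_coe_finset, hcard] at hle
    refine (hle.trans_lt ?_).ne
    rw [mul_comm, mul_comm _ (μH[_] _)]
    refine ENNReal.mul_lt_mul_right h0 htop ?_
    rw [← ENNReal.inv_pow, ENNReal.inv_lt_inv]
    norm_num

end CantorSubsum

/-- Let `C` be the middle-thirds Cantor set realized as the set of subsums
of `sₙ = 2·3⁻⁽ⁿ⁺¹⁾`, and `d = ln 2 / ln 3`.  If `(tₙ) = (s_{π(n)})` is obtained from
`(sₙ)` by removing exactly `K` terms, then `ℋ^d(C_{t,𝒟}) = 2^{-K}·ℋ^d(C)`.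
In particular no subsequence `(tₙ)` of `(sₙ)` satisfies `ℋ^d(C_{t,𝒟}) = ℋ^d(C)/3`. -/
theorem stmt_19 :
    (∀ (K : ℕ) (π : ℕ → ℕ), StrictMono π →
      (Set.range π)ᶜ.Finite → (Set.range π)ᶜ.ncard = K →
      μH[Real.log 2 / Real.log 3]
          (Set.range fun ε : ℕ → Bool =>
            ∑' n : ℕ, if ε n then (2 / 3 ^ (π n + 1) : ℝ) else 0)
        = (2 : ℝ≥0∞)⁻¹ ^ K *
          μH[Real.log 2 / Real.log 3]
            (Set.range fun ε : ℕ → Bool =>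
              ∑' n : ℕ, if ε n then (2 / 3 ^ (n + 1) : ℝ) else 0)) ∧
    ¬ ∃ π : ℕ → ℕ, StrictMono π ∧
      μH[Real.log 2 / Real.log 3]
          (Set.range fun ε : ℕ → Bool =>
            ∑' n : ℕ, if ε n then (2 / 3 ^ (π n + 1) : ℝ) else 0)
        = μH[Real.log 2 / Real.log 3]
            (Set.range fun ε : ℕ → Bool =>
              ∑' n : ℕ, if ε n then (2 / 3 ^ (n + 1) : ℝ) else 0) / 3 := by
  open CantorSubsum in
  refine ⟨fun K π hπ hfin hK => ?_, ?_⟩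
  · rw [range_tsum_ite_cantor hπ.injective, range_tsum_ite_cantor_id, ← hK]
    exact hausdorffMeasure_image_powerset summable_cantorSeq subsum_cantorSeq_injective hfin _
  · rintro ⟨π, hπ, h⟩
    rw [range_tsum_ite_cantor hπ.injective, range_tsum_ite_cantor_id] at h
    exact hausdorffMeasure_image_powerset_cantorSeq_ne_div_three _ h
end
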